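/- arXiv:1902.03648 — 4 statements merged into one kernel-verified Lean document; each statement's English description precedes it below -/
import Mathlib

section
/- Let m be a positive integer, G = P_4 ⊔ mP_2 and G' = P_4 ⊔ (m−1)P_2. Then for every first-order sentence φ in the language of graphs of quantifier depth at most m+1, G ⊨ φ if and only if G' ⊨ φ. -/
open FirstOrder

/-- Quantifier depth of a first-order (bounded) formula: atomic formulas have
depth 0, binary connectives take the max, and a quantifier adds 1. -/
def FirstOrder.Language.BoundedFormula.qdepth {L : Language} {α : Type*} :
    {n : ℕ} → L.BoundedFormula α n → ℕ
  | _, .falsum => 0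
  | _, .equal _ _ => 0
  | _, .rel _ _ => 0
  | _, .imp f g => max f.qdepth g.qdepth
  | _, .all f => f.qdepth + 1

/-- Disjoint union of `m` copies of a graph `A`. -/
def manyCopies {α : Type*} (m : ℕ) (A : SimpleGraph α) : SimpleGraph (Fin m × α) where
  Adj p q := p.1 = q.1 ∧ A.Adj p.2 q.2
  symm := ⟨by intro p q h; exact ⟨h.1.symm, h.2.symm⟩⟩
  loopless := ⟨by intro p h; exact A.loopless.irrefl _ h.2⟩

/-!
Duplicator keeps the pebbles on `P₄` identical and answers along a graph embedding
`P₄ ⊔ (m-1)P₂ ↪ P₄ ⊔ mP₂` that is the identity on `P₄` and maps copies of `P₂` onto copies of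
`P₂`. A move on the copy that the embedding misses is met by re-routing an unoccupied copy of the
smaller graph onto it. This is impossible only once all `m - 1` copies of the smaller graph are
occupied; as `n` pebbles with `r` rounds to go always satisfy `n + r ≤ m + 1`, at most two rounds
are then left. With one round left, at most one pebble lies on `P₄`, so some vertex of `P₄` is
far from all pebbles. With two rounds left, no pebble lies on `P₄` yet, and the extra copy of
`P₂` is imitated by the edge `0 — 1` of `P₄` for the last round.
-/

namespace SimpleGraph

variable {V W : Type*}

section EhrenfeuchtFraisse

variable (G : SimpleGraph V) (H : SimpleGraph W)

def IsPartialIso {n : ℕ} (v : Fin n → V) (w : Fin n → W) : Prop :=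
  ∀ k l, (v k = v l ↔ w k = w l) ∧ (G.Adj (v k) (v l) ↔ H.Adj (w k) (w l))

/-- Duplicator wins the `r`-round Ehrenfeucht–Fraïssé game on `G` and `H` from the position in
which the pebbles `v k` and `w k` have already been placed. -/
def DuplicatorWins : ℕ → {n : ℕ} → (Fin n → V) → (Fin n → W) → Prop
  | 0, _, v, w => G.IsPartialIso H v w
  | r + 1, _, v, w => G.IsPartialIso H v w ∧
      (∀ a, ∃ b, DuplicatorWins r (Fin.snoc v a) (Fin.snoc w b)) ∧
      (∀ b, ∃ a, DuplicatorWins r (Fin.snoc v a) (Fin.snoc w b))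

variable {G H} {n : ℕ} {v : Fin n → V} {w : Fin n → W}

lemma DuplicatorWins.isPartialIso {r : ℕ} (h : G.DuplicatorWins H r v w) :
    G.IsPartialIso H v w := by
  cases r with
  | zero => exact h
  | succ r => exact h.1

lemma isPartialIso_snoc_iff {a : V} {b : W} :
    G.IsPartialIso H (Fin.snoc v a) (Fin.snoc w b) ↔ G.IsPartialIso H v w ∧
      ∀ k, (a = v k ↔ b = w k) ∧ (G.Adj a (v k) ↔ H.Adj b (w k)) := by
  simp only [IsPartialIso, Fin.forall_fin_succ', Fin.snoc_castSucc, Fin.snoc_last, G.irrefl,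
    H.irrefl, iff_self, and_true, G.adj_comm _ a, H.adj_comm _ b, eq_comm (b := a),
    eq_comm (b := b), forall_and]
  tauto

lemma IsPartialIso.snoc_of_forall_ne_and_not_adj {a : V} {b : W} (h : G.IsPartialIso H v w)
    (ha : ∀ k, a ≠ v k ∧ ¬G.Adj a (v k)) (hb : ∀ k, b ≠ w k ∧ ¬H.Adj b (w k)) :
    G.IsPartialIso H (Fin.snoc v a) (Fin.snoc w b) :=
  isPartialIso_snoc_iff.2 ⟨h, fun k => ⟨iff_of_false (ha k).1 (hb k).1,
    iff_of_false (ha k).2 (hb k).2⟩⟩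

lemma Embedding.isPartialIso (e : H ↪g G) (w : Fin n → W) : G.IsPartialIso H (e ∘ w) w :=
  fun _ _ => ⟨e.injective.eq_iff, e.map_adj_iff⟩

lemma duplicatorWins_one_iff :
    G.DuplicatorWins H 1 v w ↔ G.IsPartialIso H v w ∧
      (∀ a, ∃ b, ∀ k, (a = v k ↔ b = w k) ∧ (G.Adj a (v k) ↔ H.Adj b (w k))) ∧
      (∀ b, ∃ a, ∀ k, (a = v k ↔ b = w k) ∧ (G.Adj a (v k) ↔ H.Adj b (w k))) := by
  simp only [DuplicatorWins, isPartialIso_snoc_iff]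
  constructor
  · rintro ⟨h, forth, back⟩
    exact ⟨h, fun a => (forth a).imp fun _ => And.right, fun b => (back b).imp fun _ => And.right⟩
  · rintro ⟨h, forth, back⟩
    exact ⟨h, fun a => (forth a).imp fun _ => And.intro h,
      fun b => (back b).imp fun _ => And.intro h⟩

lemma _root_.FirstOrder.Language.Term.exists_eq_var_inr {L : FirstOrder.Language}
    [L.IsRelational] (t : L.Term (Empty ⊕ Fin n)) : ∃ k, t = .var (.inr k) := by
  rcases t with (⟨⟨⟩⟩ | ⟨k⟩) | ⟨f, _⟩
  · exact ⟨k, rfl⟩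
  · exact isEmptyElim f

lemma realize_iff_of_duplicatorWins {r : ℕ} (φ : Language.graph.BoundedFormula Empty n)
    (hφ : φ.qdepth ≤ r) (h : G.DuplicatorWins H r v w) :
    (letI := G.structure; φ.Realize default v) ↔ (letI := H.structure; φ.Realize default w) := by
  let := G.structure
  let := H.structure
  induction φ generalizing r with
  | falsum => exact Iff.rfl
  | equal t₁ t₂ =>
    obtain ⟨k, rfl⟩ := t₁.exists_eq_var_inr
    obtain ⟨l, rfl⟩ := t₂.exists_eq_var_inr
    exact (h.isPartialIso k l).1
  | rel R ts =>
    cases R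
    obtain ⟨k, hk⟩ := (ts 0).exists_eq_var_inr
    obtain ⟨l, hl⟩ := (ts 1).exists_eq_var_inr
    show G.Adj _ _ ↔ H.Adj _ _
    simp only [hk, hl, Language.Term.realize_var, Sum.elim_inr]
    exact (h.isPartialIso k l).2
  | imp f g ihf ihg =>
    rw [Language.BoundedFormula.qdepth, max_le_iff] at hφ
    exact imp_congr (ihf hφ.1 h) (ihg hφ.2 h)
  | all f ih =>
    rw [Language.BoundedFormula.qdepth] at hφ
    obtain ⟨r, rfl⟩ := Nat.exists_eq_add_of_lt hφ
    obtain ⟨-, forth, back⟩ := h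
    refine ⟨fun hv b => ?_, fun hw a => ?_⟩
    · obtain ⟨a, hab⟩ := back b
      exact (ih (by omega) hab).1 (hv a)
    · obtain ⟨b, hab⟩ := forth a
      exact (ih (by omega) hab).2 (hw b)

end EhrenfeuchtFraisse

@[simp]
lemma manyCopies_adj {m : ℕ} {A : SimpleGraph V} {p q : Fin m × V} :
    (manyCopies m A).Adj p q ↔ p.1 = q.1 ∧ A.Adj p.2 q.2 := Iff.rfl

@[simp]
lemma pathGraph_two_adj {j j' : Fin 2} : (pathGraph 2).Adj j j' ↔ j ≠ j' := by
  rw [pathGraph_adj, ne_eq, Fin.ext_iff]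
  omega

instance pathGraph.decidableAdj (n : ℕ) : DecidableRel (pathGraph n).Adj :=
  fun _ _ => decidable_of_iff' _ pathGraph_adj

def manyCopiesEmbedding (A : SimpleGraph V) {m m' : ℕ} (σ : Fin m ↪ Fin m') :
    manyCopies m A ↪g manyCopies m' A where
  toFun := Prod.map σ id
  inj' := σ.injective.prodMap Function.injective_id
  map_rel_iff' := by simp [σ.injective.eq_iff]

abbrev pathUnionMatching (m : ℕ) : SimpleGraph (Fin 4 ⊕ Fin m × Fin 2) :=
  pathGraph 4 ⊕g manyCopies m (pathGraph 2)

def liftCopies {m m' : ℕ} (σ : Fin m ↪ Fin m') : pathUnionMatching m ↪g pathUnionMatching m' :=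
  Embedding.refl.sum (manyCopiesEmbedding _ σ)

@[simp]
lemma liftCopies_inl {m m' : ℕ} (σ : Fin m ↪ Fin m') (q : Fin 4) :
    liftCopies σ (.inl q) = .inl q := rfl

@[simp]
lemma liftCopies_inr {m m' : ℕ} (σ : Fin m ↪ Fin m') (c : Fin m) (j : Fin 2) :
    liftCopies σ (.inr (c, j)) = .inr (σ c, j) := rfl

open Finset Sum

lemma card_add_card_filter_isLeft_le {ι α β κ : Type*} [Fintype ι] [Fintype κ]
    {w : ι → α ⊕ κ × β} (hw : ∀ c, ∃ k j, w k = inr (c, j)) :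
    Fintype.card κ + #{k | (w k).isLeft} ≤ Fintype.card ι := by
  classical
  choose f j hf using hw
  have hf_inj : Function.Injective f := by
    intro c c' h
    have := congrArg w h
    rw [hf, hf] at this
    exact (Prod.ext_iff.1 (inr_injective this)).1
  have hdisj : Disjoint (univ.map ⟨f, hf_inj⟩) ({k | (w k).isLeft} : Finset ι) := by
    simp [Finset.disjoint_left, hf]
  calc Fintype.card κ + #{k | (w k).isLeft}
      = #(univ.map ⟨f, hf_inj⟩ ∪ ({k | (w k).isLeft} : Finset ι)) := by
        rw [card_union_of_disjoint hdisj, card_map, card_univ]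
    _ ≤ Fintype.card ι := card_le_univ _

variable {M n : ℕ}

lemma exists_inl_far_of_card_filter_isLeft_le_one {w : Fin n → Fin 4 ⊕ Fin M × Fin 2}
    (hw : #{k | (w k).isLeft} ≤ 1) :
    ∃ q : Fin 4, ∀ k, inl q ≠ w k ∧ ¬(pathUnionMatching M).Adj (inl q) (w k) := by
  by_cases h : ∃ k p, w k = inl p
  · obtain ⟨k, p, hk⟩ := h
    obtain ⟨q, hqp, hq⟩ : ∃ q, q ≠ p ∧ ¬(pathGraph 4).Adj q p :=
      (by decide : ∀ p : Fin 4, ∃ q, q ≠ p ∧ ¬(pathGraph 4).Adj q p) p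
    refine ⟨q, fun l => ?_⟩
    rcases hl : w l with p' | x
    · obtain rfl : l = k := card_le_one.1 hw l (by simp [hl]) k (by simp [hk])
      obtain rfl : p' = p := inl_injective (hl.symm.trans hk)
      simp [hqp, hq]
    · simp
  · push Not at h
    refine ⟨0, fun l => ?_⟩
    rcases hl : w l with p | x
    · exact absurd hl (h l p)
    · simp

lemma exists_liftCopies_mem_range_or {σ : Fin M ↪ Fin (M + 1)}
    (w : Fin n → Fin 4 ⊕ Fin M × Fin 2) (a : Fin 4 ⊕ Fin (M + 1) × Fin 2) :
    (∃ σ' : Fin M ↪ Fin (M + 1),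
      liftCopies σ' ∘ w = liftCopies σ ∘ w ∧ a ∈ Set.range (liftCopies σ')) ∨
    ∃ i j, a = inr (i, j) ∧ i ∉ Set.range σ ∧ ∀ c, ∃ k j', w k = inr (c, j') := by
  rcases a with q | ⟨i, j⟩
  · exact .inl ⟨σ, rfl, inl q, rfl⟩
  by_cases hi : i ∈ Set.range σ
  · obtain ⟨c, rfl⟩ := hi
    exact .inl ⟨σ, rfl, inr (c, j), rfl⟩
  by_cases hw : ∀ c, ∃ k j', w k = inr (c, j')
  · exact .inr ⟨i, j, rfl, hi, hw⟩
  push Not at hw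
  obtain ⟨c, hc⟩ := hw
  classical
  refine .inl ⟨σ.setValue c i, funext fun k => ?_, inr (c, j), by simp⟩
  rcases hk : w k with q | ⟨c', j'⟩
  · simp [hk]
  · have hc' : c' ≠ c := by rintro rfl; exact hc k j' hk
    have hσ : σ c' ≠ i := fun h => hi ⟨c', h⟩
    simp [hk, Function.Embedding.setValue_eq_of_ne hc' hσ]

lemma duplicatorWins_one_snoc_inr_inl_zero {σ : Fin M ↪ Fin (M + 1)} {i : Fin (M + 1)}
    (hi : i ∉ Set.range σ) (j : Fin 2) (c : Fin n → Fin M) (d : Fin n → Fin 2) :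
    (pathUnionMatching (M + 1)).DuplicatorWins (pathUnionMatching M) 1
      (Fin.snoc (fun k => inr (σ (c k), d k)) (inr (i, j)))
      (Fin.snoc (fun k => inr (c k, d k)) (inl 0)) := by
  have hσ : ∀ c, σ c ≠ i := fun c h => hi ⟨c, h⟩
  have hσ' : ∀ c, i ≠ σ c := fun c h => hi ⟨c, h.symm⟩
  rw [duplicatorWins_one_iff]
  refine ⟨isPartialIso_snoc_iff.2 ⟨(liftCopies σ).isPartialIso fun k => inr (c k, d k),
    fun k => by simp [hσ']⟩,
    fun a => ?_, fun b => ?_⟩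
  · rcases a with q | ⟨i', j'⟩
    · exact ⟨inl 3, by simp +decide [Fin.forall_fin_succ']⟩
    by_cases hi' : i' ∈ Set.range σ
    · obtain ⟨c', rfl⟩ := hi'
      exact ⟨inr (c', j'), by simp [Fin.forall_fin_succ', hσ, σ.injective.eq_iff]⟩
    by_cases hii : i' = i
    · subst hii
      by_cases hj : j' = j
      · exact ⟨inl 0, by simp [Fin.forall_fin_succ', hσ', hj]⟩
      · exact ⟨inl 1, by simp +decide [Fin.forall_fin_succ', hσ', hj]⟩
    · have hσi' : ∀ c, i' ≠ σ c := fun c h => hi' ⟨c, h.symm⟩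
      exact ⟨inl 3, by simp +decide [Fin.forall_fin_succ', hσi', hii]⟩
  · rcases b with q | ⟨c', j'⟩
    · obtain ⟨j₁, hj₁⟩ : ∃ j₁, j₁ ≠ j := ⟨j + 1, by fin_cases j <;> decide⟩
      fin_cases q
      · exact ⟨inr (i, j), by simp [Fin.forall_fin_succ', hσ']⟩
      · exact ⟨inr (i, j₁), by simp +decide [Fin.forall_fin_succ', hσ', hj₁]⟩
      · exact ⟨inl 0, by simp +decide [Fin.forall_fin_succ']⟩
      · exact ⟨inl 0, by simp +decide [Fin.forall_fin_succ']⟩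
    · exact ⟨inr (σ c', j'), by simp [Fin.forall_fin_succ', hσ, σ.injective.eq_iff]⟩

lemma exists_duplicatorWins_snoc_of_forall_touched {r : ℕ} {σ : Fin M ↪ Fin (M + 1)}
    {i : Fin (M + 1)} (hi : i ∉ Set.range σ) (j : Fin 2) {w : Fin n → Fin 4 ⊕ Fin M × Fin 2}
    (hw : ∀ c, ∃ k j', w k = inr (c, j')) (h : n + (r + 1) ≤ M + 2) :
    ∃ b, (pathUnionMatching (M + 1)).DuplicatorWins (pathUnionMatching M) r
      (Fin.snoc (liftCopies σ ∘ w) (inr (i, j))) (Fin.snoc w b) := by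
  have hcount := card_add_card_filter_isLeft_le hw
  rw [Fintype.card_fin, Fintype.card_fin] at hcount
  obtain _ | _ | r := r
  · have hσ : ∀ c, i ≠ σ c := fun c h => hi ⟨c, h.symm⟩
    obtain ⟨q, hq⟩ := exists_inl_far_of_card_filter_isLeft_le_one (w := w) (by omega)
    refine ⟨inl q, ((liftCopies σ).isPartialIso w).snoc_of_forall_ne_and_not_adj
      (fun k => ?_) hq⟩
    rcases hk : w k with p | ⟨c, j'⟩ <;> simp [hk, hσ]
  · have hw' : ∀ k, ∃ c d, w k = inr (c, d) := by
      intro k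
      rcases hk : w k with p | ⟨c, d⟩
      · have : #{k | (w k).isLeft} ≠ 0 := card_ne_zero.2 ⟨k, by simp [hk]⟩
        omega
      · exact ⟨c, d, rfl⟩
    choose c d hcd using hw'
    obtain rfl : w = fun k => inr (c k, d k) := funext hcd
    exact ⟨inl 0, duplicatorWins_one_snoc_inr_inl_zero hi j c d⟩
  · omega

theorem duplicatorWins_liftCopies (r : ℕ) (σ : Fin M ↪ Fin (M + 1))
    (w : Fin n → Fin 4 ⊕ Fin M × Fin 2) (h : n + r ≤ M + 2) :
    (pathUnionMatching (M + 1)).DuplicatorWins (pathUnionMatching M) r (liftCopies σ ∘ w) w := by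
  induction r generalizing n σ w with
  | zero => exact (liftCopies σ).isPartialIso w
  | succ r ih =>
    refine ⟨(liftCopies σ).isPartialIso w, fun a => ?_, fun b => ⟨liftCopies σ b, ?_⟩⟩
    · rcases exists_liftCopies_mem_range_or w a with ⟨σ', hσ', b, rfl⟩ | ⟨i, j, rfl, hi, hw⟩
      · refine ⟨b, ?_⟩
        rw [← hσ', ← Fin.comp_snoc]
        exact ih σ' _ (by omega)
      · exact exists_duplicatorWins_snoc_of_forall_touched hi j hw h
    · rw [← Fin.comp_snoc]
      exact ih σ _ (by omega)

end SimpleGraph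

open FirstOrder in
/-- the graphs `G = P₄ ⊔ mP₂` and `G' = P₄ ⊔ (m−1)P₂` satisfy exactly the
same first-order sentences of quantifier depth at most `m + 1`. -/
theorem path_union_matchings_elementary_equiv (m : ℕ) (hm : 0 < m)
    (φ : Language.graph.Sentence) (hφ : φ.qdepth ≤ m + 1) :
    (letI := (SimpleGraph.pathGraph 4 ⊕g manyCopies m (SimpleGraph.pathGraph 2)).structure
     φ.Realize (Fin 4 ⊕ Fin m × Fin 2)) ↔
    (letI := (SimpleGraph.pathGraph 4 ⊕g manyCopies (m - 1) (SimpleGraph.pathGraph 2)).structure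
     φ.Realize (Fin 4 ⊕ Fin (m - 1) × Fin 2)) := by
  obtain ⟨M, rfl⟩ : ∃ M, m = M + 1 := ⟨m - 1, by omega⟩
  have start (v : Fin 0 → Fin 4 ⊕ Fin (M + 1) × Fin 2) (w : Fin 0 → Fin 4 ⊕ Fin M × Fin 2) :
      (SimpleGraph.pathUnionMatching (M + 1)).DuplicatorWins (SimpleGraph.pathUnionMatching M)
        (M + 2) v w := by
    obtain rfl := Subsingleton.elim v (SimpleGraph.liftCopies Fin.castSuccEmb ∘ w)
    exact SimpleGraph.duplicatorWins_liftCopies _ _ w (by omega)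
  exact SimpleGraph.realize_iff_of_duplicatorWins φ hφ (start _ _)
end

section
/- Let ℓ ≥ 2, m ≥ 1, k ≥ 1 be integers. Then for every first-order sentence φ in the language of graphs of quantifier depth at most ℓ−1, the almost multipartite graph G^m_{ℓ,k} satisfies φ if and only if the almost multipartite graph G^m_{ℓ−1,k} satisfies φ. -/
/-!
Adjacency in `G^m_{ℓ,k}` depends only on which of the class, dole and part coordinates of two
vertices agree, so tuples of vertices with the same coordinatewise equality pattern are
partially isomorphic. In the Ehrenfeucht–Fraïssé game Duplicator maintains this invariant: a
newly pebbled dole or part is answered by the matching old one or by a fresh one (both sides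
have `k` doles and `m` parts), and a class likewise; a fresh class is always available because
each side has at least as many classes as there are rounds. Hence `G^m_{ℓ₁,k}` and
`G^m_{ℓ₂,k}` agree on all sentences of quantifier depth at most `min ℓ₁ ℓ₂`.
-/

open FirstOrder

/-- The almost multipartite graph `G^m_{ℓ,k}`, on triples `(i, j, h)` where `i` is the
class, `j` the dole and `h` the part: two vertices are adjacent iff they are in the same
part with different classes and doles, or have the same class and different parts. -/
def almostMultipartite (ℓ k m : ℕ) : SimpleGraph (Fin ℓ × Fin k × Fin m) where
  Adj p q := (p.2.2 = q.2.2 ∧ p.1 ≠ q.1 ∧ p.2.1 ≠ q.2.1) ∨ (p.1 = q.1 ∧ p.2.2 ≠ q.2.2)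
  symm := by
    constructor
    rintro p q (⟨h1, h2, h3⟩ | ⟨h1, h2⟩)
    · exact Or.inl ⟨h1.symm, h2.symm, h3.symm⟩
    · exact Or.inr ⟨h1.symm, h2.symm⟩
  loopless := by constructor; rintro p (⟨_, h, _⟩ | ⟨_, h⟩) <;> exact h rfl

namespace Setoid

variable {ι A B : Type*}

theorem exists_ker_snoc_eq {n : ℕ} {u : Fin n → A} {v : Fin n → B}
    (h : ker u = ker v) (hsurj : Function.Surjective v → Function.Surjective u) (a : A) :
    ∃ b, ker (Fin.snoc u a : Fin (n + 1) → A) = ker (Fin.snoc v b : Fin (n + 1) → B) := by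
  by_cases ha : a ∈ Set.range u
  · obtain ⟨t, rfl⟩ := ha
    refine ⟨v t, ?_⟩
    have hu : (Fin.snoc u (u t) : Fin (n + 1) → A) = u ∘ Fin.snoc (fun i => i) t :=
      (Fin.comp_snoc u _ t).symm
    have hv : (Fin.snoc v (v t) : Fin (n + 1) → B) = v ∘ Fin.snoc (fun i => i) t :=
      (Fin.comp_snoc v _ t).symm
    rw [hu, hv]
    exact congrArg (comap _) h
  · obtain ⟨b, hb⟩ : ∃ b, b ∉ Set.range v := by
      by_contra! hv
      exact ha (hsurj hv a)
    refine ⟨b, Setoid.ext fun s t => ?_⟩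
    have h' := Setoid.ext_iff.1 h
    induction s using Fin.lastCases <;> induction t using Fin.lastCases <;>
      simp_all [ker_def, eq_comm (a := a), eq_comm (a := b)]

theorem surjective_of_ker_eq [Finite A] {u v : ι → A} (h : ker u = ker v)
    (hv : Function.Surjective v) : Function.Surjective u := by
  have e : Set.range u ≃ A :=
    (quotientKerEquivRange u).symm.trans
      ((Quotient.congrRight (Setoid.ext_iff.1 h)).trans (quotientKerEquivOfSurjective v hv))
  intro a
  obtain ⟨⟨_, ha⟩, rfl⟩ :=
    (Subtype.val_injective.bijective_of_nat_card_le (Nat.card_congr e).ge).surjective a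
  exact ha

end Setoid

open FirstOrder Language

namespace SimpleGraph

/-- A certificate that Duplicator wins the `d`-round Ehrenfeucht–Fraïssé game on `G` and `H`
from every position related by `Rel d`. -/
structure BackAndForth {V W : Type*} (G : SimpleGraph V) (H : SimpleGraph W) where
  Rel : ℕ → ∀ {n : ℕ}, (Fin n → V) → (Fin n → W) → Prop
  eq_iff {d n : ℕ} {x : Fin n → V} {y : Fin n → W} :
    Rel d x y → ∀ s t, x s = x t ↔ y s = y t
  adj_iff {d n : ℕ} {x : Fin n → V} {y : Fin n → W} :
    Rel d x y → ∀ s t, G.Adj (x s) (x t) ↔ H.Adj (y s) (y t)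
  forth {d n : ℕ} {x : Fin n → V} {y : Fin n → W} :
    Rel (d + 1) x y → ∀ a, ∃ b, Rel d (Fin.snoc x a) (Fin.snoc y b)
  back {d n : ℕ} {x : Fin n → V} {y : Fin n → W} :
    Rel (d + 1) x y → ∀ b, ∃ a, Rel d (Fin.snoc x a) (Fin.snoc y b)

theorem _root_.FirstOrder.Language.graph.exists_term_eq_var {n : ℕ}
    (t : Language.graph.Term (Empty ⊕ Fin n)) : ∃ s, t = Term.var (Sum.inr s) := by
  rcases t with ⟨⟨e⟩ | ⟨s⟩⟩ | ⟨⟨⟩, _⟩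
  · exact e.elim
  · exact ⟨s, rfl⟩

namespace BackAndForth

variable {V W : Type*} {G : SimpleGraph V} {H : SimpleGraph W}

theorem realize_boundedFormula_iff (S : G.BackAndForth H) {n : ℕ}
    (φ : Language.graph.BoundedFormula Empty n) {d : ℕ} (hφ : φ.qdepth ≤ d)
    {x : Fin n → V} {y : Fin n → W} (h : S.Rel d x y) (v : Empty → V) (w : Empty → W) :
    (letI := G.structure; φ.Realize v x) ↔ (letI := H.structure; φ.Realize w y) := by
  let := G.structure
  let := H.structure
  induction φ generalizing d with
  | falsum => exact Iff.rfl
  | equal t₁ t₂ =>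
    obtain ⟨s, rfl⟩ := graph.exists_term_eq_var t₁
    obtain ⟨t, rfl⟩ := graph.exists_term_eq_var t₂
    exact S.eq_iff h s t
  | rel R ts =>
    cases R
    obtain ⟨s, hs⟩ := graph.exists_term_eq_var (ts 0)
    obtain ⟨t, ht⟩ := graph.exists_term_eq_var (ts 1)
    show G.Adj ((ts 0).realize _) ((ts 1).realize _) ↔ H.Adj ((ts 0).realize _) ((ts 1).realize _)
    rw [hs, ht]
    exact S.adj_iff h s t
  | imp f g ihf ihg =>
    rw [BoundedFormula.qdepth, max_le_iff] at hφ
    exact imp_congr (ihf hφ.1 h) (ihg hφ.2 h)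
  | all f ih =>
    obtain ⟨d, rfl⟩ := Nat.exists_eq_add_of_le' (Nat.le_of_add_left_le hφ)
    have hf : f.qdepth ≤ d := by simpa [BoundedFormula.qdepth] using hφ
    refine ⟨fun hx b => ?_, fun hy a => ?_⟩
    · obtain ⟨a, ha⟩ := S.back h b
      exact (ih hf ha).1 (hx a)
    · obtain ⟨b, hb⟩ := S.forth h a
      exact (ih hf hb).2 (hy b)

end BackAndForth

end SimpleGraph

namespace almostMultipartite

structure PatternMatch {ℓ₁ ℓ₂ k m : ℕ} (d : ℕ) {n : ℕ} (x : Fin n → Fin ℓ₁ × Fin k × Fin m)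
    (y : Fin n → Fin ℓ₂ × Fin k × Fin m) : Prop where
  add_le_left : n + d ≤ ℓ₁
  add_le_right : n + d ≤ ℓ₂
  ker_class : Setoid.ker (Prod.fst ∘ x) = Setoid.ker (Prod.fst ∘ y)
  ker_dole : Setoid.ker ((·.2.1) ∘ x) = Setoid.ker ((·.2.1) ∘ y)
  ker_part : Setoid.ker ((·.2.2) ∘ x) = Setoid.ker ((·.2.2) ∘ y)

namespace PatternMatch

variable {ℓ₁ ℓ₂ k m d n : ℕ} {x : Fin n → Fin ℓ₁ × Fin k × Fin m}
  {y : Fin n → Fin ℓ₂ × Fin k × Fin m}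

theorem symm (h : PatternMatch d x y) : PatternMatch d y x :=
  ⟨h.add_le_right, h.add_le_left, h.ker_class.symm, h.ker_dole.symm, h.ker_part.symm⟩

theorem coord_eq_iff (h : PatternMatch d x y) (s t : Fin n) :
    ((x s).1 = (x t).1 ↔ (y s).1 = (y t).1) ∧ ((x s).2.1 = (x t).2.1 ↔ (y s).2.1 = (y t).2.1) ∧
      ((x s).2.2 = (x t).2.2 ↔ (y s).2.2 = (y t).2.2) :=
  ⟨Setoid.ext_iff.1 h.ker_class s t, Setoid.ext_iff.1 h.ker_dole s t,
    Setoid.ext_iff.1 h.ker_part s t⟩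

theorem eq_iff (h : PatternMatch d x y) (s t : Fin n) : x s = x t ↔ y s = y t := by
  obtain ⟨hc, hd, hp⟩ := h.coord_eq_iff s t
  simp only [Prod.ext_iff, hc, hd, hp]

theorem adj_iff (h : PatternMatch d x y) (s t : Fin n) :
    (almostMultipartite ℓ₁ k m).Adj (x s) (x t) ↔ (almostMultipartite ℓ₂ k m).Adj (y s) (y t) := by
  obtain ⟨hc, hd, hp⟩ := h.coord_eq_iff s t
  simp only [almostMultipartite, ne_eq, hc, hd, hp]

theorem forth (h : PatternMatch (d + 1) x y) (a : Fin ℓ₁ × Fin k × Fin m) :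
    ∃ b, PatternMatch d (Fin.snoc x a) (Fin.snoc y b) := by
  have hroom : ¬Function.Surjective (Prod.fst ∘ y) := fun hy => by
    have := Fintype.card_le_of_surjective _ hy
    simp only [Fintype.card_fin] at this
    have := h.add_le_right
    omega
  obtain ⟨i, hi⟩ := Setoid.exists_ker_snoc_eq h.ker_class (absurd · hroom) a.1
  obtain ⟨j, hj⟩ := Setoid.exists_ker_snoc_eq h.ker_dole
    (Setoid.surjective_of_ker_eq h.ker_dole) a.2.1
  obtain ⟨p, hp⟩ := Setoid.exists_ker_snoc_eq h.ker_part
    (Setoid.surjective_of_ker_eq h.ker_part) a.2.2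
  refine ⟨(i, j, p), by have := h.add_le_left; omega, by have := h.add_le_right; omega,
    ?_, ?_, ?_⟩ <;> simp only [Fin.comp_snoc]
  exacts [hi, hj, hp]

end PatternMatch

def backAndForth (ℓ₁ ℓ₂ k m : ℕ) :
    (almostMultipartite ℓ₁ k m).BackAndForth (almostMultipartite ℓ₂ k m) where
  Rel d _ x y := PatternMatch d x y
  eq_iff h := h.eq_iff
  adj_iff h := h.adj_iff
  forth h := h.forth
  back h b := (h.symm.forth b).imp fun _ ha => ha.symm

end almostMultipartite

theorem almostMultipartite_realize_iff_of_qdepth_le {ℓ₁ ℓ₂ k m : ℕ}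
    (φ : Language.graph.Sentence) (h₁ : φ.qdepth ≤ ℓ₁) (h₂ : φ.qdepth ≤ ℓ₂) :
    (letI := (almostMultipartite ℓ₁ k m).structure
     φ.Realize (Fin ℓ₁ × Fin k × Fin m)) ↔
    (letI := (almostMultipartite ℓ₂ k m).structure
     φ.Realize (Fin ℓ₂ × Fin k × Fin m)) :=
  (almostMultipartite.backAndForth ℓ₁ ℓ₂ k m).realize_boundedFormula_iff φ le_rfl
    ⟨by simpa using h₁, by simpa using h₂, Setoid.ext (·.elim0), Setoid.ext (·.elim0),
      Setoid.ext (·.elim0)⟩ _ _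

open FirstOrder in
theorem almostMultipartite_elementary_equiv_general (ℓ k m : ℕ)
    (φ : Language.graph.Sentence) (hφ : φ.qdepth ≤ ℓ - 1) :
    (letI := (almostMultipartite ℓ k m).structure
     φ.Realize (Fin ℓ × Fin k × Fin m)) ↔
    (letI := (almostMultipartite (ℓ - 1) k m).structure
     φ.Realize (Fin (ℓ - 1) × Fin k × Fin m)) :=
  almostMultipartite_realize_iff_of_qdepth_le φ (hφ.trans (Nat.sub_le ℓ 1)) hφ

open FirstOrder in
/-- for `ℓ ≥ 2`, the almost multipartite graphs `G^m_{ℓ,k}` and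
`G^m_{ℓ−1,k}` satisfy exactly the same first-order sentences of quantifier depth
at most `ℓ − 1`. -/
theorem almostMultipartite_elementary_equiv (ℓ k m : ℕ) (hℓ : 2 ≤ ℓ) (hm : 1 ≤ m)
    (hk : 1 ≤ k) (φ : Language.graph.Sentence) (hφ : φ.qdepth ≤ ℓ - 1) :
    (letI := (almostMultipartite ℓ k m).structure
     φ.Realize (Fin ℓ × Fin k × Fin m)) ↔
    (letI := (almostMultipartite (ℓ - 1) k m).structure
     φ.Realize (Fin (ℓ - 1) × Fin k × Fin m)) :=
  almostMultipartite_elementary_equiv_general ℓ k m φ hφ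
end

section
/- Let G_{3,1,1} be the 5-vertex graph consisting of a triangle x_1x_2x_3 together with two pendant edges x_1x_4 and x_2x_5 attached at two distinct triangle vertices. Let G_0 be the 8-vertex graph on {a_1,…,a_4,b_1,…,b_4} in which a_1,…,a_4 induce a complete graph K_4, b_1,…,b_4 induce the 4-cycle b_1b_2b_3b_4, and additionally a_i is adjacent to b_i for each i; let H_0 be the triangular prism (two triangles a_1a_2a_3 and b_1b_2b_3 together with the matching edges a_ib_i). Let G* be the graph obtained from the disjoint union of two copies of G_0 by adding one new vertex adjacent to all other vertices, and H* be the graph obtained from the disjoint union of two copies of H_0 by adding one new vertex adjacent to all other vertices. Then G* contains an induced subgraph isomorphic to G_{3,1,1}, while H* does not contain an induced subgraph isomorphic to G_{3,1,1}. -/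
/-- Add an apex vertex (`none`) adjacent to all vertices of `G`. -/
def addApex {α : Type*} (G : SimpleGraph α) : SimpleGraph (Option α) where
  Adj u v := match u, v with
    | none, none => False
    | none, some _ => True
    | some _, none => True
    | some a, some b => G.Adj a b
  symm := by
    constructor
    rintro (_ | a) (_ | b) h
    · exact h
    · exact trivial
    · exact trivial
    · exact G.adj_symm h
  loopless := by
    constructor
    rintro (_ | a) h
    · exact h
    · exact G.loopless.irrefl a h

/-- `G₀`: 8-vertex graph in which the `inl` vertices `a₁,…,a₄` induce a complete graph
`K₄`, the `inr` vertices `b₁,…,b₄` induce the 4-cycle `b₁b₂b₃b₄`, and `aᵢ ~ bᵢ`. -/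
def G₀ : SimpleGraph (Fin 4 ⊕ Fin 4) where
  Adj u v := match u, v with
    | .inl a, .inl b => a ≠ b
    | .inl a, .inr b => a = b
    | .inr a, .inl b => a = b
    | .inr a, .inr b => (SimpleGraph.cycleGraph 4).Adj a b
  symm := by
    constructor
    rintro (a | a) (b | b) h
    · exact h.symm
    · exact h.symm
    · exact h.symm
    · exact (SimpleGraph.cycleGraph 4).adj_symm h
  loopless := by
    constructor
    rintro (a | a) h
    · exact h rfl
    · exact (SimpleGraph.cycleGraph 4).loopless.irrefl a h

/-- `H₀`: the triangular prism, two triangles `a₁a₂a₃` (the `inl` vertices) and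
`b₁b₂b₃` (the `inr` vertices) together with the matching edges `aᵢbᵢ`. -/
def H₀ : SimpleGraph (Fin 3 ⊕ Fin 3) where
  Adj u v := match u, v with
    | .inl a, .inl b => a ≠ b
    | .inl a, .inr b => a = b
    | .inr a, .inl b => a = b
    | .inr a, .inr b => a ≠ b
  symm := by constructor; rintro (a | a) (b | b) h <;> exact h.symm
  loopless := by constructor; rintro (a | a) h <;> exact h rfl

/-- `G*`: the disjoint union of two copies of `G₀` with an added apex vertex
adjacent to everything. -/
def Gstar : SimpleGraph (Option ((Fin 4 ⊕ Fin 4) ⊕ (Fin 4 ⊕ Fin 4))) :=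
  addApex (G₀ ⊕g G₀)

/-- `H*`: the disjoint union of two copies of `H₀` with an added apex vertex
adjacent to everything. -/
def Hstar : SimpleGraph (Option ((Fin 3 ⊕ Fin 3) ⊕ (Fin 3 ⊕ Fin 3))) :=
  addApex (H₀ ⊕g H₀)

/-- `G_{3,1,1}`: the 5-vertex graph consisting of the triangle `0-1-2` together with the
pendant edges `0-3` and `1-4`. -/
def G311 : SimpleGraph (Fin 5) :=
  SimpleGraph.fromRel fun a b =>
    (a = 0 ∧ b = 1) ∨ (a = 1 ∧ b = 2) ∨ (a = 0 ∧ b = 2) ∨ (a = 0 ∧ b = 3) ∨ (a = 1 ∧ b = 4)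


/-!
`G_{3,1,1}` is connected and has no dominating vertex, so an induced copy of it in a graph with an
apex avoids the apex and lies in a single component. The triangular prism has no induced copy:
the neighbours outside a triangle of two of its vertices lie in the other triangle, hence are
adjacent. In `G₀` the triangle `a₁a₃a₂` with pendants `b₁`, `b₃` (opposite on the 4-cycle) is one.
-/

namespace SimpleGraph

variable {U V W : Type*} {F : SimpleGraph U} {G : SimpleGraph V} {H : SimpleGraph W}

lemma Embedding.nonempty_of_forall_mem_range {G' : SimpleGraph W} (f : F ↪g G') (e : G ↪g G')
    (h : ∀ x, f x ∈ Set.range e) : Nonempty (F ↪g G) := by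
  choose g hg using h
  have hinj : Function.Injective g := fun x y hxy => f.injective (by rw [← hg x, ← hg y, hxy])
  exact ⟨⟨⟨g, hinj⟩, fun {x y} => by
    change G.Adj (g x) (g y) ↔ F.Adj x y
    rw [← e.map_adj_iff, hg, hg, f.map_adj_iff]⟩⟩

lemma Reachable.sum_isLeft_eq {u v : V ⊕ W} (h : (G ⊕g H).Reachable u v) :
    u.isLeft = v.isLeft := by
  obtain ⟨p⟩ := h
  induction p with
  | nil => rfl
  | @cons a b _ hadj _ ih =>
    rw [← ih]
    rcases a with a | a <;> rcases b with b | b <;> simp_all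

lemma Connected.nonempty_embedding_or_of_embedding_sum (hF : F.Connected) (f : F ↪g G ⊕g H) :
    Nonempty (F ↪g G) ∨ Nonempty (F ↪g H) := by
  obtain ⟨x₀⟩ := hF.nonempty
  have hside (x : U) : (f x).isLeft = (f x₀).isLeft :=
    ((hF x x₀).map f.toHom).sum_isLeft_eq
  cases h₀ : f x₀ with
  | inl a =>
    refine .inl (f.nonempty_of_forall_mem_range Embedding.sumInl fun x => ?_)
    cases hx : f x with
    | inl b => exact ⟨b, rfl⟩
    | inr b => simpa [hx, h₀] using hside x
  | inr a =>
    refine .inr (f.nonempty_of_forall_mem_range Embedding.sumInr fun x => ?_)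
    cases hx : f x with
    | inl b => simpa [hx, h₀] using hside x
    | inr b => exact ⟨b, rfl⟩

end SimpleGraph

def addApexEmbedding {α : Type*} (G : SimpleGraph α) : G ↪g addApex G where
  toFun := some
  inj' := Option.some_injective α
  map_rel_iff' := Iff.rfl

lemma nonempty_embedding_of_embedding_addApex {U V : Type*} {F : SimpleGraph U}
    {G : SimpleGraph V} (f : F ↪g addApex G) (hF : ∀ x, ∃ y, y ≠ x ∧ ¬F.Adj x y) :
    Nonempty (F ↪g G) := by
  refine f.nonempty_of_forall_mem_range (addApexEmbedding G) fun x => ?_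
  obtain ⟨y, hyx, hxy⟩ := hF x
  cases hfx : f x with
  | some a => exact ⟨a, rfl⟩
  | none =>
    cases hfy : f y with
    | none => exact absurd (f.injective (hfy.trans hfx.symm)) hyx
    | some b =>
      refine absurd (f.map_adj_iff.mp ?_) hxy
      rw [hfx, hfy]
      trivial

instance : DecidableRel G₀.Adj := by
  rintro (a|a) (b|b) <;> unfold G₀ <;> dsimp <;> infer_instance

instance : DecidableRel H₀.Adj := by
  rintro (a|a) (b|b) <;> unfold H₀ <;> dsimp <;> infer_instance

instance : DecidableRel G311.Adj := by unfold G311; infer_instance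

lemma H₀_adj_of_pendants : ∀ v₀ v₁ v₂ v₃ v₄ : Fin 3 ⊕ Fin 3,
    H₀.Adj v₀ v₁ ∧ H₀.Adj v₁ v₂ ∧ H₀.Adj v₀ v₂ ∧ H₀.Adj v₀ v₃ ∧ H₀.Adj v₁ v₄ ∧
    ¬H₀.Adj v₁ v₃ ∧ ¬H₀.Adj v₂ v₃ ∧ ¬H₀.Adj v₀ v₄ ∧ ¬H₀.Adj v₂ v₄ → H₀.Adj v₃ v₄ := by
  decide

lemma not_nonempty_G311_embedding_H₀ : ¬Nonempty (G311 ↪g H₀) := by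
  rintro ⟨f⟩
  have := H₀_adj_of_pendants (f 0) (f 1) (f 2) (f 3) (f 4)
  simp only [f.map_adj_iff] at this
  revert this
  decide

def G311EmbeddingG₀ : G311 ↪g G₀ where
  toFun := ![.inl 0, .inl 2, .inl 1, .inr 0, .inr 2]
  inj' := by decide
  map_rel_iff' := by decide

lemma G311_exists_ne_not_adj : ∀ x : Fin 5, ∃ y, y ≠ x ∧ ¬G311.Adj x y := by
  decide

lemma G311_connected : G311.Connected := by
  rw [SimpleGraph.connected_iff_exists_forall_reachable]
  have h01 : G311.Adj 0 1 := by decide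
  refine ⟨0, fun w => ?_⟩
  fin_cases w
  · rfl
  · exact h01.reachable
  · exact (show G311.Adj 0 2 by decide).reachable
  · exact (show G311.Adj 0 3 by decide).reachable
  · exact h01.reachable.trans (show G311.Adj 1 4 by decide).reachable

/-- `G*` contains an induced subgraph isomorphic to `G_{3,1,1}`,
while `H*` does not. -/
theorem apex_graphs_induced_G311 :
    Nonempty (G311 ↪g Gstar) ∧ ¬Nonempty (G311 ↪g Hstar) := by
  refine ⟨⟨(addApexEmbedding _).comp (SimpleGraph.Embedding.sumInl.comp G311EmbeddingG₀)⟩, ?_⟩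
  rintro ⟨f⟩
  obtain ⟨f⟩ := nonempty_embedding_of_embedding_addApex f G311_exists_ne_not_adj
  rcases G311_connected.nonempty_embedding_or_of_embedding_sum f with h | h <;>
    exact not_nonempty_G311_embedding_H₀ h
end

section
/- Let G_0 be the 8-vertex graph on {a_1,…,a_4,b_1,…,b_4} in which a_1,…,a_4 induce a complete graph K_4, b_1,…,b_4 induce the 4-cycle b_1b_2b_3b_4, and a_i is adjacent to b_i for each i; let H_0 be the triangular prism (two triangles a_1a_2a_3 and b_1b_2b_3 together with the matching edges a_ib_i). Let G* be obtained from the disjoint union of two copies of G_0 by adding one new vertex adjacent to all other vertices, and H* be obtained from the disjoint union of two copies of H_0 by adding one new vertex adjacent to all other vertices. Then in each of the graphs G* and H*, every pair (u,v) of distinct non-apex vertices has the extension property: there exist four vertices z_1, z_2, z_3, z_4, each distinct from u and v, such that z_1 is adjacent to neither u nor v; z_2 is adjacent to u but not to v; z_3 is adjacent to v but not to u; and z_4 is adjacent to both u and v. -/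
/-!
Both graphs are an apex over a disjoint union `G ⊕g G` with `G` a graph in which every vertex has
a private neighbour with respect to any other vertex (a neighbour of `u` outside `N[v]`) and no
vertex is adjacent to all others. The apex is a common neighbour of any two vertices. For two
vertices in the same copy the other copy supplies a common non-neighbour and the private
neighbours supply the rest; for two vertices in different copies, a non-neighbour of one of them
in its own copy is a common non-neighbour, and a neighbour of each in its own copy is a neighbour
of that vertex only. Finally `G₀` and the prism `H₀` have both properties by a finite check.
-/

namespace SimpleGraph

variable {V α β : Type*}

def ExtensionProperty (G : SimpleGraph V) (u v : V) : Prop :=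
  ∃ z₁ z₂ z₃ z₄ : V,
    (z₁ ≠ u ∧ z₁ ≠ v ∧ ¬G.Adj z₁ u ∧ ¬G.Adj z₁ v) ∧
    (z₂ ≠ u ∧ z₂ ≠ v ∧ G.Adj z₂ u ∧ ¬G.Adj z₂ v) ∧
    (z₃ ≠ u ∧ z₃ ≠ v ∧ ¬G.Adj z₃ u ∧ G.Adj z₃ v) ∧
    (z₄ ≠ u ∧ z₄ ≠ v ∧ G.Adj z₄ u ∧ G.Adj z₄ v)

def HasPrivateNeighbors (G : SimpleGraph V) : Prop :=
  ∀ ⦃u v : V⦄, u ≠ v → ∃ z, z ≠ v ∧ G.Adj z u ∧ ¬G.Adj z v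

def NoDominatingVertex (G : SimpleGraph V) : Prop :=
  ∀ u : V, ∃ z, z ≠ u ∧ ¬G.Adj z u

theorem HasPrivateNeighbors.exists_adj {G : SimpleGraph V} (hP : G.HasPrivateNeighbors)
    (hD : G.NoDominatingVertex) (u : V) : ∃ z, G.Adj z u :=
  have ⟨_, hwu, _⟩ := hD u
  have ⟨z, _, hzu, _⟩ := hP hwu.symm
  ⟨z, hzu⟩

theorem extensionProperty_addApex {K : SimpleGraph V} {u v : V}
    (h₁ : ∃ z, z ≠ u ∧ z ≠ v ∧ ¬K.Adj z u ∧ ¬K.Adj z v)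
    (h₂ : ∃ z, z ≠ v ∧ K.Adj z u ∧ ¬K.Adj z v)
    (h₃ : ∃ z, z ≠ u ∧ K.Adj z v ∧ ¬K.Adj z u) :
    (addApex K).ExtensionProperty (some u) (some v) := by
  obtain ⟨z₁, h₁u, h₁v, h₁⟩ := h₁
  obtain ⟨z₂, h₂v, h₂u, h₂⟩ := h₂
  obtain ⟨z₃, h₃u, h₃v, h₃⟩ := h₃
  refine ⟨some z₁, some z₂, some z₃, none, ?_, ?_, ?_, ?_⟩ <;>
    simp_all [addApex, h₂u.ne, h₃v.ne]

section Sum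

variable {G : SimpleGraph α} {H : SimpleGraph β}

theorem exists_not_adj_not_adj_sum [Nonempty α] [Nonempty β] (hG : G.NoDominatingVertex)
    (hH : H.NoDominatingVertex) (u v : α ⊕ β) :
    ∃ z, z ≠ u ∧ z ≠ v ∧ ¬(G ⊕g H).Adj z u ∧ ¬(G ⊕g H).Adj z v := by
  rcases u with a | b <;> rcases v with a' | b'
  · exact ⟨.inr (Classical.arbitrary β), by simp⟩
  · obtain ⟨z, hza, hz⟩ := hG a
    exact ⟨.inl z, by simp [hza, hz]⟩
  · obtain ⟨z, hzb, hz⟩ := hH b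
    exact ⟨.inr z, by simp [hzb, hz]⟩
  · exact ⟨.inl (Classical.arbitrary α), by simp⟩

theorem exists_adj_not_adj_sum (hGP : G.HasPrivateNeighbors) (hGD : G.NoDominatingVertex)
    (hHP : H.HasPrivateNeighbors) (hHD : H.NoDominatingVertex) {u v : α ⊕ β} (huv : u ≠ v) :
    ∃ z, z ≠ v ∧ (G ⊕g H).Adj z u ∧ ¬(G ⊕g H).Adj z v := by
  rcases u with a | b <;> rcases v with a' | b'
  · obtain ⟨z, hz⟩ := hGP (Sum.inl_injective.ne_iff.mp huv)
    exact ⟨.inl z, by simpa using hz⟩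
  · obtain ⟨z, hz⟩ := hGP.exists_adj hGD a
    exact ⟨.inl z, by simpa using hz⟩
  · obtain ⟨z, hz⟩ := hHP.exists_adj hHD b
    exact ⟨.inr z, by simpa using hz⟩
  · obtain ⟨z, hz⟩ := hHP (Sum.inr_injective.ne_iff.mp huv)
    exact ⟨.inr z, by simpa using hz⟩

theorem extensionProperty_addApex_sum [Nonempty α] [Nonempty β] (hGP : G.HasPrivateNeighbors)
    (hGD : G.NoDominatingVertex) (hHP : H.HasPrivateNeighbors) (hHD : H.NoDominatingVertex)
    {u v : α ⊕ β} (huv : u ≠ v) : (addApex (G ⊕g H)).ExtensionProperty (some u) (some v) :=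
  extensionProperty_addApex (exists_not_adj_not_adj_sum hGD hHD u v)
    (exists_adj_not_adj_sum hGP hGD hHP hHD huv) (exists_adj_not_adj_sum hGP hGD hHP hHD huv.symm)

end Sum

end SimpleGraph

open SimpleGraph

instance inst_s19 : DecidableRel G₀.Adj
  | .inl a, .inl b => inferInstanceAs (Decidable (a ≠ b))
  | .inl a, .inr b => inferInstanceAs (Decidable (a = b))
  | .inr a, .inl b => inferInstanceAs (Decidable (a = b))
  | .inr a, .inr b => inferInstanceAs (Decidable ((cycleGraph 4).Adj a b))

instance inst_s19_2 : DecidableRel H₀.Adj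
  | .inl a, .inl b => inferInstanceAs (Decidable (a ≠ b))
  | .inl a, .inr b => inferInstanceAs (Decidable (a = b))
  | .inr a, .inl b => inferInstanceAs (Decidable (a = b))
  | .inr a, .inr b => inferInstanceAs (Decidable (a ≠ b))

theorem G₀_hasPrivateNeighbors : G₀.HasPrivateNeighbors := by
  unfold HasPrivateNeighbors; decide

theorem G₀_noDominatingVertex : G₀.NoDominatingVertex := by
  unfold NoDominatingVertex; decide

theorem H₀_hasPrivateNeighbors : H₀.HasPrivateNeighbors := by
  unfold HasPrivateNeighbors; decide

theorem H₀_noDominatingVertex : H₀.NoDominatingVertex := by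
  unfold NoDominatingVertex; decide

/-- in each of `G*` and `H*`, every pair of distinct non-apex vertices
`(u, v)` has the extension property: there are four vertices `z₁, z₂, z₃, z₄`, each
distinct from `u` and `v`, with `z₁` adjacent to neither, `z₂` adjacent to `u` only,
`z₃` adjacent to `v` only, and `z₄` adjacent to both. -/
theorem apex_graphs_extension_property :
    (∀ u v : (Fin 4 ⊕ Fin 4) ⊕ (Fin 4 ⊕ Fin 4), u ≠ v →
      ∃ z₁ z₂ z₃ z₄ : Option ((Fin 4 ⊕ Fin 4) ⊕ (Fin 4 ⊕ Fin 4)),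
        (z₁ ≠ some u ∧ z₁ ≠ some v ∧ ¬Gstar.Adj z₁ (some u) ∧ ¬Gstar.Adj z₁ (some v)) ∧
        (z₂ ≠ some u ∧ z₂ ≠ some v ∧ Gstar.Adj z₂ (some u) ∧ ¬Gstar.Adj z₂ (some v)) ∧
        (z₃ ≠ some u ∧ z₃ ≠ some v ∧ ¬Gstar.Adj z₃ (some u) ∧ Gstar.Adj z₃ (some v)) ∧
        (z₄ ≠ some u ∧ z₄ ≠ some v ∧ Gstar.Adj z₄ (some u) ∧ Gstar.Adj z₄ (some v))) ∧
    (∀ u v : (Fin 3 ⊕ Fin 3) ⊕ (Fin 3 ⊕ Fin 3), u ≠ v →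
      ∃ z₁ z₂ z₃ z₄ : Option ((Fin 3 ⊕ Fin 3) ⊕ (Fin 3 ⊕ Fin 3)),
        (z₁ ≠ some u ∧ z₁ ≠ some v ∧ ¬Hstar.Adj z₁ (some u) ∧ ¬Hstar.Adj z₁ (some v)) ∧
        (z₂ ≠ some u ∧ z₂ ≠ some v ∧ Hstar.Adj z₂ (some u) ∧ ¬Hstar.Adj z₂ (some v)) ∧
        (z₃ ≠ some u ∧ z₃ ≠ some v ∧ ¬Hstar.Adj z₃ (some u) ∧ Hstar.Adj z₃ (some v)) ∧
        (z₄ ≠ some u ∧ z₄ ≠ some v ∧ Hstar.Adj z₄ (some u) ∧ Hstar.Adj z₄ (some v))) :=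
  ⟨fun _ _ huv => extensionProperty_addApex_sum G₀_hasPrivateNeighbors G₀_noDominatingVertex
      G₀_hasPrivateNeighbors G₀_noDominatingVertex huv,
    fun _ _ huv => extensionProperty_addApex_sum H₀_hasPrivateNeighbors H₀_noDominatingVertex
      H₀_hasPrivateNeighbors H₀_noDominatingVertex huv⟩
end
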